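/- Let 1 ≤ d ≤ n be integers and C₀ ≥ 1. Let ξ : ℝ → ℝ be continuous, nonnegative, vanishing outside (−1,1) and positive on (0,1), and set β = min{ ξ(s) : C₀^{−2/d}/4 ≤ s ≤ 1/2 } > 0 and γ = (8(1 + (2C₀)^{1/d} + C₀^{2/d}))^{−1}. Let ν be a finite Borel measure on ℝⁿ that is d-regular with constant C₀, let x ∈ supp ν and ε ∈ (0,1). Then for every finite Borel measure μ on ℝⁿ and every z ∈ ℝⁿ satisfying |x−z| + η_d(ν,μ) ≤ γ·ε, one has ∫ ξ(|y−z|/ε) dμ(y) ≥ β · C₀^{−1} · 2^{−(2d+1)} · ε^d. -/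

import Mathlib

open MeasureTheory

noncomputable section

/-- Support of a Borel measure: points all of whose open neighbourhoods have positive measure. -/
def msupport {X : Type*} [TopologicalSpace X] [MeasurableSpace X] (μ : Measure X) : Set X :=
  {x | ∀ U : Set X, IsOpen U → x ∈ U → 0 < μ U}

/-- `ν` is `d`-regular (Ahlfors regular) with constant `C₀ ≥ 1`:
`C₀⁻¹ r^d ≤ ν(B(x,r)) ≤ C₀ r^d` for every `x ∈ supp ν` and `r ∈ (0,2]`. -/
def IsDRegular {X : Type*} [MeasurableSpace X] [PseudoMetricSpace X]
    (d : ℕ) (C₀ : ℝ) (ν : Measure X) : Prop :=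
  ∀ x ∈ msupport ν, ∀ r : ℝ, r ∈ Set.Ioc (0 : ℝ) 2 →
    ENNReal.ofReal (C₀⁻¹ * r ^ d) ≤ ν (Metric.ball x r) ∧
    ν (Metric.ball x r) ≤ ENNReal.ofReal (C₀ * r ^ d)

/-- Modified Prokhorov distance
`η_d(μ,ν) = inf { δ > 0 : μ(B) ≤ ν(B^δ) + δ^d and ν(B) ≤ μ(B^δ) + δ^d for all closed balls B }`,
where `B^δ` is the open `δ`-neighbourhood (thickening) of `B`. -/
def etaDist {X : Type*} [MeasurableSpace X] [PseudoMetricSpace X]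
    (d : ℕ) (μ ν : Measure X) : ℝ :=
  sInf {δ : ℝ | 0 < δ ∧ ∀ (x : X) (r : ℝ),
    μ (Metric.closedBall x r) ≤
        ν (Metric.thickening δ (Metric.closedBall x r)) + ENNReal.ofReal (δ ^ d) ∧
    ν (Metric.closedBall x r) ≤
        μ (Metric.thickening δ (Metric.closedBall x r)) + ENNReal.ofReal (δ ^ d)}

/-! Comparing `μ` with `ν` on the balls `B(x, ε/2 - s)` and `B(z, aε)`, where `s = |x - z| + η`
and `a = C₀^{-2/d}/4`, the `d`-regularity of `ν` and the definition of `η = η_d(ν, μ)` show that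
`μ` gives the annulus `aε ≤ |y - z| ≤ ε/2` mass at least
`C₀⁻¹ (ε/2 - s)^d - 2η^d - C₀ (aε + s)^d`, and the choice of `γ` makes this at least
`C₀⁻¹ 2^{-(2d+1)} ε^d`. On that annulus the integrand is at least `β`, and `β > 0` because `ξ` is
continuous and positive on `[a, 1/2]`. -/

open Metric Filter Set Topology

theorem Real.rpow_div_natCast_pow {x : ℝ} (hx : 0 ≤ x) (y : ℝ) {d : ℕ} (hd : d ≠ 0) :
    (x ^ (y / d)) ^ d = x ^ y := by
  rw [← Real.rpow_mul_natCast hx, div_mul_cancel₀ _ (Nat.cast_ne_zero.2 hd)]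

theorem IsCompact.sInf_image_pos {K : Set ℝ} {f : ℝ → ℝ} (hK : IsCompact K) (hne : K.Nonempty)
    (hf : ContinuousOn f K) (hpos : ∀ t ∈ K, 0 < f t) : 0 < sInf (f '' K) := by
  obtain ⟨t, ht, hft⟩ := (hK.image_of_continuousOn hf).sInf_mem (hne.image f)
  exact hft ▸ hpos t ht

theorem mul_pow_le_pow_sub_pow_sub_pow {A B Q w : ℝ} (hB : 0 ≤ B) (hQ : 0 ≤ Q) (hQB : Q ≤ B)
    (hw : 0 ≤ w) (hA : B + Q + w ≤ A) (k : ℕ) :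
    w * B ^ k ≤ A ^ (k + 1) - B ^ (k + 1) - Q ^ (k + 1) := by
  have hQk : Q ^ k ≤ B ^ k := pow_le_pow_left₀ hQ hQB k
  have hBk : B ^ k ≤ (B + Q + w) ^ k := pow_le_pow_left₀ hB (by linarith) k
  have hsum : B ^ (k + 1) + Q ^ (k + 1) + w * B ^ k ≤ A ^ (k + 1) :=
    calc B ^ (k + 1) + Q ^ (k + 1) + w * B ^ k = B ^ k * B + Q * Q ^ k + w * B ^ k := by ring
      _ ≤ B ^ k * B + Q * B ^ k + w * B ^ k := by gcongr
      _ = B ^ k * (B + Q + w) := by ring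
      _ ≤ (B + Q + w) ^ k * (B + Q + w) := by gcongr
      _ = (B + Q + w) ^ (k + 1) := by ring
      _ ≤ A ^ (k + 1) := pow_le_pow_left₀ (by linarith) hA _
  linarith

/-- With `c^d = C₀²` and `m^d = 2C₀` the two error terms become `C₀⁻¹ (mη)^d` and
`C₀⁻¹ (ε/4 + cs)^d`, and `8(1 + m + c)s ≤ ε` leaves a gap of `ε/8` between `ε/2 - s` and
`ε/4 + cs + mη`; this is where the constant `γ` comes from. -/
theorem annulus_lower_bound {d : ℕ} (hd : d ≠ 0) {C₀ c m ε s η : ℝ} (hC₀ : 0 < C₀) (hc : 0 < c)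
    (hm : 0 ≤ m) (hcd : c ^ d = C₀ ^ 2) (hmd : m ^ d = 2 * C₀) (hε : 0 ≤ ε) (hη : 0 ≤ η)
    (hηs : η ≤ s) (hs : 8 * (1 + m + c) * s ≤ ε) :
    C₀⁻¹ * ((2 : ℝ) ^ (2 * d + 1))⁻¹ * ε ^ d ≤
      C₀⁻¹ * (1 / 2 * ε - s) ^ d - 2 * η ^ d - C₀ * (c⁻¹ / 4 * ε + s) ^ d := by
  obtain ⟨k, rfl⟩ : ∃ k, d = k + 1 := ⟨d - 1, by omega⟩
  have hs0 : 0 ≤ s := hη.trans hηs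
  have hmη : m * η ≤ m * s := mul_le_mul_of_nonneg_left hηs hm
  have hcs : 0 ≤ c * s := mul_nonneg hc.le hs0
  have hη' : 2 * η ^ (k + 1) = C₀⁻¹ * (m * η) ^ (k + 1) := by
    rw [mul_pow, hmd]; field_simp
  have hρ' : C₀ * (c⁻¹ / 4 * ε + s) ^ (k + 1) = C₀⁻¹ * (ε / 4 + c * s) ^ (k + 1) := by
    rw [show ε / 4 + c * s = c * (c⁻¹ / 4 * ε + s) by field_simp, mul_pow, hcd]
    field_simp
  have hpow : ((2 : ℝ) ^ (2 * (k + 1) + 1))⁻¹ * ε ^ (k + 1) = ε / 8 * (ε / 4) ^ k := by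
    rw [show 2 * (k + 1) + 1 = 3 + 2 * k by ring, pow_add, pow_mul, div_pow, pow_succ]
    field_simp
    ring
  have hmain : ε / 8 * (ε / 4) ^ k ≤
      (1 / 2 * ε - s) ^ (k + 1) - (ε / 4 + c * s) ^ (k + 1) - (m * η) ^ (k + 1) :=
    calc ε / 8 * (ε / 4) ^ k ≤ ε / 8 * (ε / 4 + c * s) ^ k := by gcongr; linarith
      _ ≤ _ := mul_pow_le_pow_sub_pow_sub_pow (by positivity) (by positivity) (by linarith)
          (by positivity) (by linarith) k
  rw [hη', hρ', mul_assoc, hpow]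
  calc C₀⁻¹ * (ε / 8 * (ε / 4) ^ k)
      ≤ C₀⁻¹ * ((1 / 2 * ε - s) ^ (k + 1) - (ε / 4 + c * s) ^ (k + 1) - (m * η) ^ (k + 1)) := by
        gcongr
    _ = _ := by ring

section EtaDist

variable {X : Type*} [MeasurableSpace X] [PseudoMetricSpace X] {d : ℕ} {μ ν : Measure X}
  {δ δ' : ℝ}

def IsEtaAdmissible (d : ℕ) (μ ν : Measure X) (δ : ℝ) : Prop :=
  0 < δ ∧ ∀ (x : X) (r : ℝ),
    μ (closedBall x r) ≤ ν (thickening δ (closedBall x r)) + ENNReal.ofReal (δ ^ d) ∧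
    ν (closedBall x r) ≤ μ (thickening δ (closedBall x r)) + ENNReal.ofReal (δ ^ d)

theorem etaDist_eq_sInf : etaDist d μ ν = sInf {δ | IsEtaAdmissible d μ ν δ} := rfl

theorem IsEtaAdmissible.symm (h : IsEtaAdmissible d μ ν δ) : IsEtaAdmissible d ν μ δ :=
  ⟨h.1, fun x r => (h.2 x r).symm⟩

theorem IsEtaAdmissible.mono (h : IsEtaAdmissible d μ ν δ) (hδ : δ ≤ δ') :
    IsEtaAdmissible d μ ν δ' := by
  have hpow : ENNReal.ofReal (δ ^ d) ≤ ENNReal.ofReal (δ' ^ d) :=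
    ENNReal.ofReal_le_ofReal (pow_le_pow_left₀ h.1.le hδ d)
  refine ⟨h.1.trans_le hδ, fun x r => ⟨?_, ?_⟩⟩
  · exact (h.2 x r).1.trans (add_le_add (measure_mono (thickening_mono hδ _)) hpow)
  · exact (h.2 x r).2.trans (add_le_add (measure_mono (thickening_mono hδ _)) hpow)

theorem exists_isEtaAdmissible [IsFiniteMeasure μ] [IsFiniteMeasure ν] (hd : d ≠ 0) :
    ∃ δ, IsEtaAdmissible d μ ν δ := by
  set D : ℝ := μ.real univ + ν.real univ + 1
  have hμ : 0 ≤ μ.real univ := measureReal_nonneg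
  have hν : 0 ≤ ν.real univ := measureReal_nonneg
  have hD : D ≤ D ^ d := le_self_pow₀ (by simp only [D]; linarith) hd
  have hmass : ∀ (ρ : Measure X) (s : Set X), ρ univ ≠ ⊤ → ρ.real univ ≤ D →
      ρ s ≤ ENNReal.ofReal (D ^ d) := fun ρ s hfin hρ =>
    calc ρ s ≤ ρ univ := measure_mono (subset_univ s)
      _ = ENNReal.ofReal (ρ.real univ) := (ofReal_measureReal hfin).symm
      _ ≤ ENNReal.ofReal (D ^ d) := ENNReal.ofReal_le_ofReal (hρ.trans hD)
  refine ⟨D, by positivity, fun x r => ⟨?_, ?_⟩⟩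
  · exact (hmass μ _ (measure_ne_top _ _) (by simp only [D]; linarith)).trans le_add_self
  · exact (hmass ν _ (measure_ne_top _ _) (by simp only [D]; linarith)).trans le_add_self

theorem etaDist_nonneg : 0 ≤ etaDist d μ ν :=
  Real.sInf_nonneg fun _ hδ => hδ.1.le

theorem isEtaAdmissible_of_etaDist_lt [IsFiniteMeasure μ] [IsFiniteMeasure ν] (hd : d ≠ 0)
    (h : etaDist d μ ν < δ) : IsEtaAdmissible d μ ν δ := by
  rw [etaDist_eq_sInf] at h
  obtain ⟨δ₀, hδ₀, hlt⟩ := exists_lt_of_csInf_lt (exists_isEtaAdmissible hd) h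
  exact IsEtaAdmissible.mono hδ₀ hlt.le

theorem IsEtaAdmissible.measureReal_closedBall_le [IsFiniteMeasure ν]
    (h : IsEtaAdmissible d μ ν δ) (x : X) (r : ℝ) :
    μ.real (closedBall x r) ≤ ν.real (ball x (r + δ)) + δ ^ d := by
  have hsub : thickening δ (closedBall x r) ⊆ ball x (r + δ) := by
    intro y hy
    obtain ⟨p, hp, hyp⟩ := mem_thickening_iff.1 hy
    rw [mem_closedBall] at hp
    rw [mem_ball]
    linarith [dist_triangle y p x]
  have hle := (h.2 x r).1.trans (add_le_add_left (measure_mono hsub) _)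
  rwa [← ENNReal.toReal_le_toReal (ne_top_of_le_ne_top (by finiteness) hle) (by finiteness),
     ENNReal.toReal_add (measure_ne_top _ _) ENNReal.ofReal_ne_top,
     ENNReal.toReal_ofReal (pow_nonneg h.1.le d)] at hle

end EtaDist

section Regular

variable {X : Type*} [MeasurableSpace X] [PseudoMetricSpace X] {d : ℕ} {C₀ : ℝ}
  {μ ν : Measure X} {x z : X} {r : ℝ}

theorem IsDRegular.le_measureReal_ball [IsFiniteMeasure ν] (h : IsDRegular d C₀ ν)
    (hx : x ∈ msupport ν) (hr : r ∈ Ioc 0 2) : C₀⁻¹ * r ^ d ≤ ν.real (ball x r) :=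
  (ENNReal.ofReal_le_iff_le_toReal (measure_ne_top _ _)).1 (h x hx r hr).1

theorem IsDRegular.measureReal_ball_le (h : IsDRegular d C₀ ν) (hC₀ : 0 ≤ C₀)
    (hx : x ∈ msupport ν) (hr : r ∈ Ioc 0 2) : ν.real (ball x r) ≤ C₀ * r ^ d :=
  ENNReal.toReal_le_of_le_ofReal (by have := hr.1.le; positivity) (h x hx r hr).2

theorem IsDRegular.measureReal_annulus_ge [IsFiniteMeasure μ] [IsFiniteMeasure ν]
    (hreg : IsDRegular d C₀ ν) (hC₀ : 0 ≤ C₀) (hx : x ∈ msupport ν) {δ R ρ : ℝ}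
    (hδ : IsEtaAdmissible d ν μ δ) (hR : dist x z + δ < R) (hR2 : R ≤ 2) (hρ : 0 ≤ ρ)
    (hρ2 : ρ + dist x z + δ ≤ 2) :
    C₀⁻¹ * (R - dist x z - δ) ^ d - 2 * δ ^ d - C₀ * (ρ + dist x z + δ) ^ d ≤
      μ.real (closedBall z R \ ball z ρ) := by
  have hxz := dist_nonneg (x := x) (y := z)
  have hδ0 := hδ.1
  have hsub : ball x (R - dist x z - δ + δ) ⊆ closedBall z R :=
    ball_subset_closedBall.trans (closedBall_subset_closedBall' (by linarith))
  have hinner : C₀⁻¹ * (R - dist x z - δ) ^ d ≤ μ.real (closedBall z R) + δ ^ d :=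
    calc C₀⁻¹ * (R - dist x z - δ) ^ d ≤ ν.real (ball x (R - dist x z - δ)) :=
          hreg.le_measureReal_ball hx ⟨by linarith, by linarith⟩
      _ ≤ ν.real (closedBall x (R - dist x z - δ)) := measureReal_mono ball_subset_closedBall
      _ ≤ μ.real (ball x (R - dist x z - δ + δ)) + δ ^ d := hδ.measureReal_closedBall_le _ _
      _ ≤ μ.real (closedBall z R) + δ ^ d := by
          gcongr; exact measure_ne_top _ _
  have houter : μ.real (ball z ρ) ≤ C₀ * (ρ + dist x z + δ) ^ d + δ ^ d :=
    calc μ.real (ball z ρ) ≤ μ.real (closedBall z ρ) := measureReal_mono ball_subset_closedBall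
      _ ≤ ν.real (ball z (ρ + δ)) + δ ^ d := hδ.symm.measureReal_closedBall_le _ _
      _ ≤ ν.real (ball x (ρ + dist x z + δ)) + δ ^ d := by
          have hsub' : ball z (ρ + δ) ⊆ ball x (ρ + dist x z + δ) :=
            ball_subset_ball' (by linarith [dist_comm z x])
          gcongr; exact measure_ne_top _ _
      _ ≤ C₀ * (ρ + dist x z + δ) ^ d + δ ^ d := by
          gcongr; exact hreg.measureReal_ball_le hC₀ hx ⟨by linarith, hρ2⟩
  linarith [le_measureReal_sdiff (μ := μ) (s₁ := closedBall z R) (s₂ := ball z ρ)]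

theorem IsDRegular.measureReal_annulus_ge_etaDist [IsFiniteMeasure μ] [IsFiniteMeasure ν]
    (hreg : IsDRegular d C₀ ν) (hC₀ : 0 ≤ C₀) (hd : d ≠ 0) (hx : x ∈ msupport ν) {R ρ : ℝ}
    (hR : dist x z + etaDist d ν μ < R) (hR2 : R ≤ 2) (hρ : 0 ≤ ρ)
    (hρ2 : ρ + dist x z + etaDist d ν μ < 2) :
    C₀⁻¹ * (R - dist x z - etaDist d ν μ) ^ d - 2 * etaDist d ν μ ^ d
        - C₀ * (ρ + dist x z + etaDist d ν μ) ^ d ≤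
      μ.real (closedBall z R \ ball z ρ) := by
  set η := etaDist d ν μ
  have hcont : Continuous fun δ : ℝ =>
      C₀⁻¹ * (R - dist x z - δ) ^ d - 2 * δ ^ d - C₀ * (ρ + dist x z + δ) ^ d := by
    fun_prop
  have hη : η < min (R - dist x z) (2 - ρ - dist x z) := lt_min (by linarith) (by linarith)
  refine le_of_tendsto (x := 𝓝[>] η) ((hcont.tendsto η).mono_left nhdsWithin_le_nhds) ?_
  filter_upwards [Ioo_mem_nhdsGT hη] with δ hδ
  have hδR := hδ.2.trans_le (min_le_left _ _)
  have hδρ := hδ.2.trans_le (min_le_right _ _)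
  exact hreg.measureReal_annulus_ge hC₀ hx (isEtaAdmissible_of_etaDist_lt hd hδ.1)
    (by linarith) hR2 hρ (by linarith)

theorem IsDRegular.pow_le_measureReal_annulus [IsFiniteMeasure μ] [IsFiniteMeasure ν]
    (hreg : IsDRegular d C₀ ν) (hd : d ≠ 0) (hC₀ : 0 < C₀)
    (hx : x ∈ msupport ν) {c m ε : ℝ} (hc : 1 ≤ c) (hm : 0 ≤ m) (hcd : c ^ d = C₀ ^ 2)
    (hmd : m ^ d = 2 * C₀) (hε : 0 < ε) (hε4 : ε ≤ 4)
    (hs : 8 * (1 + m + c) * (dist x z + etaDist d ν μ) ≤ ε) :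
    C₀⁻¹ * ((2 : ℝ) ^ (2 * d + 1))⁻¹ * ε ^ d ≤
      μ.real (closedBall z (1 / 2 * ε) \ ball z (c⁻¹ / 4 * ε)) := by
  have hxz : 0 ≤ dist x z := dist_nonneg
  have hη : 0 ≤ etaDist d ν μ := etaDist_nonneg
  have hs8 : dist x z + etaDist d ν μ ≤ ε / 8 := by nlinarith
  have hρ : c⁻¹ / 4 * ε ≤ ε / 4 := by have := inv_le_one_of_one_le₀ hc; nlinarith
  refine (annulus_lower_bound hd hC₀ (by positivity) hm hcd hmd hε.le hη (by linarith) hs).trans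
    ?_
  have key := hreg.measureReal_annulus_ge_etaDist (μ := μ) (z := z) (R := 1 / 2 * ε)
    (ρ := c⁻¹ / 4 * ε) hC₀.le hd hx (by linarith) (by linarith) (by positivity) (by linarith)
  rwa [sub_sub (1 / 2 * ε), add_assoc (c⁻¹ / 4 * ε)] at key

end Regular

theorem mul_measureReal_annulus_le_integral {E : Type*} [SeminormedAddCommGroup E]
    [MeasurableSpace E] [OpensMeasurableSpace E] {μ : Measure E} [IsFiniteMeasure μ]
    {ξ : ℝ → ℝ} (hξc : Continuous ξ) (hξ0 : ∀ s, 0 ≤ ξ s) (hξs : HasCompactSupport ξ)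
    {ε : ℝ} (hε : 0 < ε) (z : E) (a b : ℝ) :
    sInf (ξ '' Icc a b) * μ.real (closedBall z (b * ε) \ ball z (a * ε)) ≤
      ∫ y, ξ (‖y - z‖ / ε) ∂μ := by
  have hint : Integrable (fun y => ξ (‖y - z‖ / ε)) μ := by
    obtain ⟨C, hC⟩ := hξc.bounded_above_of_compact_support hξs
    exact .of_bound (hξc.comp (by fun_prop)).aestronglyMeasurable C (.of_forall fun y => hC _)
  have hle : ∀ y ∈ closedBall z (b * ε) \ ball z (a * ε),
      sInf (ξ '' Icc a b) ≤ ξ (‖y - z‖ / ε) := by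
    rintro y ⟨hyb, hya⟩
    rw [mem_closedBall, dist_eq_norm] at hyb
    rw [mem_ball, dist_eq_norm, not_lt] at hya
    exact csInf_le (isCompact_Icc.image hξc).bddBelow <| mem_image_of_mem ξ
      ⟨(le_div_iff₀ hε).2 hya, (div_le_iff₀ hε).2 hyb⟩
  calc _ ≤ ∫ y in closedBall z (b * ε) \ ball z (a * ε), ξ (‖y - z‖ / ε) ∂μ :=
        setIntegral_ge_of_const_le_real (measurableSet_closedBall.diff measurableSet_ball)
          (measure_ne_top _ _) hle hint.integrableOn
    _ ≤ ∫ y, ξ (‖y - z‖ / ε) ∂μ := setIntegral_le_integral hint (.of_forall fun _ => hξ0 _)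

theorem stmt10_general {n : ℕ} (d : ℕ) (hd : 1 ≤ d) (C₀ : ℝ) (hC₀ : 1 ≤ C₀)
    (ξ : ℝ → ℝ) (hξc : Continuous ξ) (hξ0 : ∀ s, 0 ≤ ξ s)
    (hξsupp : ∀ s, s ∉ Set.Ioo (-1 : ℝ) 1 → ξ s = 0)
    (hξpos : ∀ s ∈ Set.Ioo (0 : ℝ) 1, 0 < ξ s)
    (β γ : ℝ)
    (hβ : β = sInf (ξ '' Set.Icc (C₀ ^ (-(2 : ℝ) / d) / 4) (1 / 2)))
    (hγ : γ = (8 * (1 + (2 * C₀) ^ ((1 : ℝ) / d) + C₀ ^ ((2 : ℝ) / d)))⁻¹)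
    (ν : Measure (EuclideanSpace ℝ (Fin n))) [IsFiniteMeasure ν]
    (hreg : IsDRegular d C₀ ν)
    (x : EuclideanSpace ℝ (Fin n)) (hx : x ∈ msupport ν)
    (ε : ℝ) (hε : ε ∈ Set.Ioo (0 : ℝ) 1) :
    0 < β ∧
    ∀ μ : Measure (EuclideanSpace ℝ (Fin n)), IsFiniteMeasure μ →
      ∀ z : EuclideanSpace ℝ (Fin n), ‖x - z‖ + etaDist d ν μ ≤ γ * ε →
        β * C₀⁻¹ * ((2 : ℝ) ^ (2 * d + 1))⁻¹ * ε ^ d ≤ ∫ y, ξ (‖y - z‖ / ε) ∂μ := by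
  obtain ⟨hε0, hε1⟩ := hε
  have hd0 : d ≠ 0 := by omega
  have hC₀0 : 0 < C₀ := by linarith
  rw [neg_div, Real.rpow_neg hC₀0.le] at hβ
  set c := C₀ ^ ((2 : ℝ) / d)
  set m := (2 * C₀) ^ ((1 : ℝ) / d)
  have hc : 1 ≤ c := Real.one_le_rpow hC₀ (by positivity)
  have hcd : c ^ d = C₀ ^ 2 := by rw [Real.rpow_div_natCast_pow hC₀0.le _ hd0]; norm_cast
  have hmd : m ^ d = 2 * C₀ := by
    rw [Real.rpow_div_natCast_pow (by positivity) _ hd0, Real.rpow_one]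
  have hβ0 : 0 < β := hβ ▸ isCompact_Icc.sInf_image_pos
    (nonempty_Icc.2 (by linarith [inv_le_one_of_one_le₀ hc])) hξc.continuousOn
    fun t ht => hξpos t ⟨lt_of_lt_of_le (by positivity) ht.1, ht.2.trans_lt (by norm_num)⟩
  refine ⟨hβ0, fun μ _ z hz => ?_⟩
  rw [hγ, inv_mul_eq_div, le_div_iff₀ (by positivity), ← dist_eq_norm] at hz
  have hmass := hreg.pow_le_measureReal_annulus hd0 hC₀0 hx hc (by positivity) hcd hmd hε0
    (by linarith) (by linarith)
  have hξs : HasCompactSupport ξ := HasCompactSupport.intro isCompact_Icc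
    fun s hs => hξsupp s fun h => hs (Ioo_subset_Icc_self h)
  calc β * C₀⁻¹ * ((2 : ℝ) ^ (2 * d + 1))⁻¹ * ε ^ d
      = β * (C₀⁻¹ * ((2 : ℝ) ^ (2 * d + 1))⁻¹ * ε ^ d) := by ring
    _ ≤ β * μ.real (closedBall z (1 / 2 * ε) \ ball z (c⁻¹ / 4 * ε)) := by gcongr
    _ ≤ ∫ y, ξ (‖y - z‖ / ε) ∂μ := by
      rw [hβ]; exact mul_measureReal_annulus_le_integral hξc hξ0 hξs hε0 z _ _

theorem stmt10 {n : ℕ} (d : ℕ) (hd : 1 ≤ d) (hdn : d ≤ n) (C₀ : ℝ) (hC₀ : 1 ≤ C₀)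
    (ξ : ℝ → ℝ) (hξc : Continuous ξ) (hξ0 : ∀ s, 0 ≤ ξ s)
    (hξsupp : ∀ s, s ∉ Set.Ioo (-1 : ℝ) 1 → ξ s = 0)
    (hξpos : ∀ s ∈ Set.Ioo (0 : ℝ) 1, 0 < ξ s)
    (β γ : ℝ)
    (hβ : β = sInf (ξ '' Set.Icc (C₀ ^ (-(2 : ℝ) / d) / 4) (1 / 2)))
    (hγ : γ = (8 * (1 + (2 * C₀) ^ ((1 : ℝ) / d) + C₀ ^ ((2 : ℝ) / d)))⁻¹)
    (ν : Measure (EuclideanSpace ℝ (Fin n))) [IsFiniteMeasure ν]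
    (hreg : IsDRegular d C₀ ν)
    (x : EuclideanSpace ℝ (Fin n)) (hx : x ∈ msupport ν)
    (ε : ℝ) (hε : ε ∈ Set.Ioo (0 : ℝ) 1) :
    0 < β ∧
    ∀ μ : Measure (EuclideanSpace ℝ (Fin n)), IsFiniteMeasure μ →
      ∀ z : EuclideanSpace ℝ (Fin n), ‖x - z‖ + etaDist d ν μ ≤ γ * ε →
        β * C₀⁻¹ * ((2 : ℝ) ^ (2 * d + 1))⁻¹ * ε ^ d ≤ ∫ y, ξ (‖y - z‖ / ε) ∂μ :=
  stmt10_general d hd C₀ hC₀ ξ hξc hξ0 hξsupp hξpos β γ hβ hγ ν hreg x hx ε hε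

end
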